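/- arXiv:1912.11719 — 3 statements merged into one kernel-verified Lean document; each statement's English description precedes it below -/
import Mathlib

section
/- Let 0 < λ ≤ 1 and let a2, a3 be complex numbers with |a2| ≤ 1 + λ and |a3| ≤ 1 + λ + λ^2. Then 2·Re(a2^2·conj(a3)) - 2|a2|^2 - |a3|^2 + 1 ≤ max(1, λ^2(1+λ)(3+λ)). -/
/-!
Since `Re (a₂² ā₃) ≤ |a₂|² |a₃|`, the left side is at most `2u²(v - 1) - v² + 1` with `u = |a₂|`,
`v = |a₃|`. For `v ≤ 1` this is at most `1`. For `v ≥ 1` it increases in `u`, and after putting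
`u = 1 + λ` it is a concave quadratic in `v` with vertex `(1 + λ)² ≥ 1 + λ + λ²`, so it is largest
at `v = 1 + λ + λ²`, where it equals `λ²(1 + λ)(3 + λ)`.
-/

open ComplexConjugate

lemma Complex.re_sq_mul_conj_le_norm (a b : ℂ) : (a ^ 2 * conj b).re ≤ ‖a‖ ^ 2 * ‖b‖ :=
  calc (a ^ 2 * conj b).re ≤ ‖a ^ 2 * conj b‖ := Complex.re_le_norm _
    _ = ‖a‖ ^ 2 * ‖b‖ := by rw [norm_mul, norm_pow, Complex.norm_conj]

lemma toeplitz_bound_of_le_one {u v : ℝ} (hv : v ≤ 1) :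
    2 * u ^ 2 * v - 2 * u ^ 2 - v ^ 2 + 1 ≤ 1 := by
  nlinarith [mul_nonneg (sq_nonneg u) (sub_nonneg.2 hv), sq_nonneg v]

lemma toeplitz_bound_of_one_le {lam u v : ℝ} (hl : 0 ≤ lam) (hu₀ : 0 ≤ u) (hu : u ≤ 1 + lam)
    (hv₁ : 1 ≤ v) (hv : v ≤ 1 + lam + lam ^ 2) :
    2 * u ^ 2 * v - 2 * u ^ 2 - v ^ 2 + 1 ≤ lam ^ 2 * (1 + lam) * (3 + lam) := by
  set w := 1 + lam + lam ^ 2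
  have hu2 : u ^ 2 ≤ (1 + lam) ^ 2 := pow_le_pow_left₀ hu₀ hu 2
  -- `f(w) - f(v) = (w - v)(2(1 + λ)² - w - v)` for `f(t) = 2(1 + λ)²(t - 1) - t² + 1`
  have hvertex : 0 ≤ (w - v) * (2 * (1 + lam) ^ 2 - w - v) :=
    mul_nonneg (sub_nonneg.2 hv) (by nlinarith)
  calc 2 * u ^ 2 * v - 2 * u ^ 2 - v ^ 2 + 1 = 2 * u ^ 2 * (v - 1) - v ^ 2 + 1 := by ring
    _ ≤ 2 * (1 + lam) ^ 2 * (v - 1) - v ^ 2 + 1 := by gcongr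
    _ ≤ 2 * (1 + lam) ^ 2 * (w - 1) - w ^ 2 + 1 := by nlinarith
    _ = lam ^ 2 * (1 + lam) * (3 + lam) := by ring

theorem stmt_7_general (lam : ℝ) (hl : 0 < lam) (a2 a3 : ℂ)
    (h2 : ‖a2‖ ≤ 1 + lam) (h3 : ‖a3‖ ≤ 1 + lam + lam^2) :
    2 * (a2^2 * (starRingEnd ℂ) a3).re - 2*(‖a2‖)^2 - (‖a3‖)^2 + 1
      ≤ max 1 (lam^2*(1+lam)*(3+lam)) := by
  have hre := Complex.re_sq_mul_conj_le_norm a2 a3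
  calc 2 * (a2^2 * (starRingEnd ℂ) a3).re - 2*(‖a2‖)^2 - (‖a3‖)^2 + 1
      ≤ 2 * ‖a2‖ ^ 2 * ‖a3‖ - 2 * ‖a2‖ ^ 2 - ‖a3‖ ^ 2 + 1 := by linarith
    _ ≤ max 1 (lam^2*(1+lam)*(3+lam)) := by
      rcases le_total ‖a3‖ 1 with hv | hv
      · exact le_max_of_le_left (toeplitz_bound_of_le_one hv)
      · exact le_max_of_le_right
          (toeplitz_bound_of_one_le hl.le (norm_nonneg a2) h2 hv h3)

theorem stmt_7 (lam : ℝ) (hl : 0 < lam) (hl1 : lam ≤ 1) (a2 a3 : ℂ)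
    (h2 : ‖a2‖ ≤ 1 + lam) (h3 : ‖a3‖ ≤ 1 + lam + lam^2) :
    2 * (a2^2 * (starRingEnd ℂ) a3).re - 2*(‖a2‖)^2 - (‖a3‖)^2 + 1
      ≤ max 1 (lam^2*(1+lam)*(3+lam)) :=
  stmt_7_general lam hl a2 a3 h2 h3
end

section
/- Let a2, a3 be complex numbers with |a3 - a2^2| ≤ (1 - |a2|^2)/3. Then 2·Re(a2^2·conj(a3)) - 2|a2|^2 - |a3|^2 + 1 ≥ (8/9)·(1 - |a2|^2)^2 ≥ 0. -/
open ComplexConjugate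

theorem Complex.two_mul_re_mul_conj (z w : ℂ) :
    2 * (z * conj w).re = ‖z‖ ^ 2 + ‖w‖ ^ 2 - ‖z - w‖ ^ 2 := by
  simp only [Complex.sq_norm, Complex.normSq_sub]
  ring

theorem stmt_9 (a2 a3 : ℂ) (h : ‖a3 - a2^2‖ ≤ (1 - (‖a2‖)^2)/3) :
    2 * (a2^2 * (starRingEnd ℂ) a3).re - 2*(‖a2‖)^2 - (‖a3‖)^2 + 1
      ≥ (8/9)*(1 - (‖a2‖)^2)^2 ∧ (8/9)*(1 - (‖a2‖)^2)^2 ≥ 0 := by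
  -- The left side is `(1 - |a2|²)² - |a3 - a2²|²`, and Trimble's bound caps the subtracted term.
  have hre := Complex.two_mul_re_mul_conj (a2 ^ 2) a3
  rw [norm_pow, norm_sub_rev] at hre
  have hsq : ‖a3 - a2 ^ 2‖ ^ 2 ≤ ((1 - ‖a2‖ ^ 2) / 3) ^ 2 :=
    pow_le_pow_left₀ (norm_nonneg _) h 2
  refine ⟨?_, by positivity⟩
  rw [hre]
  linarith
end

section
/- Let a2, a3 be complex numbers with |a2| ≤ 1/2 and |a3 - a2^2| ≤ 1/4. Then 2·Re(a2^2·conj(a3)) - 2|a2|^2 - |a3|^2 + 1 ≥ (1 - |a2|^2)^2 - 1/16 ≥ 1/2. -/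
open ComplexConjugate

theorem two_re_sq_mul_conj_eq_sub_norm_sq (a2 a3 : ℂ) :
    2 * (a2 ^ 2 * conj a3).re - 2 * ‖a2‖ ^ 2 - ‖a3‖ ^ 2 + 1
      = (1 - ‖a2‖ ^ 2) ^ 2 - ‖a3 - a2 ^ 2‖ ^ 2 := by
  rw [norm_sub_rev]
  simp only [Complex.sq_norm, Complex.normSq_sub, map_pow]
  ring

theorem stmt_11 (a2 a3 : ℂ) (h2 : ‖a2‖ ≤ 1/2)
    (h : ‖a3 - a2^2‖ ≤ 1/4) :
    2 * (a2^2 * (starRingEnd ℂ) a3).re - 2*(‖a2‖)^2 - (‖a3‖)^2 + 1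
      ≥ (1 - (‖a2‖)^2)^2 - 1/16 ∧ (1 - (‖a2‖)^2)^2 - 1/16 ≥ 1/2 := by
  have hd : ‖a3 - a2 ^ 2‖ ^ 2 ≤ (1 / 4) ^ 2 := pow_le_pow_left₀ (norm_nonneg _) h 2
  have hx : ‖a2‖ ^ 2 ≤ (1 / 2) ^ 2 := pow_le_pow_left₀ (norm_nonneg _) h2 2
  rw [two_re_sq_mul_conj_eq_sub_norm_sq]
  constructor
  · linarith
  · nlinarith
end
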